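/- arXiv:1906.09424 — 10 statements merged into one kernel-verified Lean document; each statement's English description precedes it below -/
import Mathlib

section
/- Let q > 5 be a prime power with q ≡ 0 (mod 4). Then the projective special linear group PSL(2,q) has exactly one non-abelian centralizer, i.e. |nacent(PSL(2,q))| = 1. -/
/-- `cent G` is the set of centralizers of elements of `G`, as subgroups of `G`. -/
def cent (G : Type*) [Group G] : Set (Subgroup G) :=
  Set.range fun g : G => Subgroup.centralizer {g}

/-- `nacent G` is the set of non-abelian centralizers of elements of `G`. -/
def nacent (G : Type*) [Group G] : Set (Subgroup G) :=
  {C | C ∈ cent G ∧ ¬ IsMulCommutative C}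

/-!
Writing `v(A)` for the coordinates of `A - A₁₁ • 1` in the matrix units `E₀₀, E₀₁, E₁₀`, the
commutator `A * B - B * A` of two `2 × 2` matrices is given by the cross product `v(A) × v(B)`.
Vectors whose cross product with a fixed non-zero vector vanishes are proportional, so any two
matrices commuting with a non-scalar one commute with each other. Hence in `SL(2, F)` the
centralizer of a non-central element is abelian, while the centralizer of a central element is
the whole, non-abelian, group. If `4 ∣ q` then `q` is a power of `2`, and in characteristic `2`
the centre `{±1}` of `SL(2, F)` is trivial, so `PSL(2, q) ≃* SL(2, q)`.
-/

open Matrix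
open scoped MatrixGroups

theorem nacent_eq_singleton_top {G : Type*} [Group G] (hG : ∃ x y : G, ¬Commute x y)
    (hCA : ∀ g x y : G, g ∉ Subgroup.center G → Commute g x → Commute g y → Commute x y) :
    nacent G = {⊤} := by
  have top_not_comm : ¬IsMulCommutative (⊤ : Subgroup G) := by
    obtain ⟨x, y, hxy⟩ := hG
    rintro ⟨⟨hcomm⟩⟩
    exact hxy (congrArg Subtype.val (hcomm ⟨x, Subgroup.mem_top x⟩ ⟨y, Subgroup.mem_top y⟩))
  ext C
  constructor
  · rintro ⟨⟨g, rfl⟩, hnc⟩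
    by_contra hg
    refine hnc ⟨⟨fun x y => Subtype.ext ?_⟩⟩
    refine hCA g x y (fun hgc => hg ?_) (Subgroup.mem_centralizer_singleton_iff.mp x.2).symm
      (Subgroup.mem_centralizer_singleton_iff.mp y.2).symm
    exact Subgroup.centralizer_eq_top_iff_subset.mpr (Set.singleton_subset_iff.mpr hgc)
  · rintro rfl
    exact ⟨⟨1, Subgroup.centralizer_eq_top_iff_subset.mpr (by simp)⟩, top_not_comm⟩

theorem cross_eq_zero_of_cross_eq_zero {F : Type*} [Field F] {u v w : Fin 3 → F} (hu : u ≠ 0)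
    (hv : u ⨯₃ v = 0) (hw : u ⨯₃ w = 0) : v ⨯₃ w = 0 := by
  have multiple {x : Fin 3 → F} (hx : u ⨯₃ x = 0) : ∃ a : F, a • u = x := by
    have := mt crossProduct_ne_zero_iff_linearIndependent.mpr (not_not.mpr hx)
    simpa [LinearIndependent.pair_iff' hu] using this
  obtain ⟨a, rfl⟩ := multiple hv
  obtain ⟨b, rfl⟩ := multiple hw
  simp [cross_self]

namespace Matrix

section CommRing

variable {R : Type*} [CommRing R]

def nonscalarPart (A : Matrix (Fin 2) (Fin 2) R) : Fin 3 → R :=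
  ![A 0 0 - A 1 1, A 0 1, A 1 0]

theorem commute_iff_cross_nonscalarPart_eq_zero {A B : Matrix (Fin 2) (Fin 2) R} :
    Commute A B ↔ A.nonscalarPart ⨯₃ B.nonscalarPart = 0 := by
  set c := A.nonscalarPart ⨯₃ B.nonscalarPart
  have commutator : A * B - B * A = !![c 0, c 2; c 1, -c 0] := by
    ext i j
    fin_cases i <;> fin_cases j <;>
      simp [c, mul_apply, Fin.sum_univ_two, cross_apply, nonscalarPart] <;> ring
  rw [commute_iff_eq, ← sub_eq_zero, commutator]
  constructor
  · intro h
    ext i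
    fin_cases i
    · exact congrFun (congrFun h 0) 0
    · exact congrFun (congrFun h 1) 0
    · exact congrFun (congrFun h 0) 1
  · intro h
    ext i j
    fin_cases i <;> fin_cases j <;> simp [h]

theorem eq_scalar_of_nonscalarPart_eq_zero {A : Matrix (Fin 2) (Fin 2) R}
    (hA : A.nonscalarPart = 0) : A = scalar (Fin 2) (A 0 0) := by
  have h0 : A 0 0 - A 1 1 = 0 := congrFun hA 0
  have h1 : A 0 1 = 0 := congrFun hA 1
  have h2 : A 1 0 = 0 := congrFun hA 2
  ext i j
  fin_cases i <;> fin_cases j <;> simp [h1, h2, sub_eq_zero.mp h0]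

theorem SpecialLinearGroup.exists_not_commute [Nontrivial R] :
    ∃ x y : SL(2, R), ¬Commute x y := by
  obtain ⟨U, hU⟩ : ∃ U : SL(2, R), (U : Matrix (Fin 2) (Fin 2) R) = !![1, 1; 0, 1] :=
    ⟨⟨_, by simp [det_fin_two]⟩, rfl⟩
  obtain ⟨V, hV⟩ : ∃ V : SL(2, R), (V : Matrix (Fin 2) (Fin 2) R) = !![1, 0; 1, 1] :=
    ⟨⟨_, by simp [det_fin_two]⟩, rfl⟩
  refine ⟨U, V, fun h => ?_⟩
  have := congrArg (fun g : SL(2, R) => (g : Matrix (Fin 2) (Fin 2) R) 0 0) h.eq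
  simp [Matrix.SpecialLinearGroup.coe_mul, hU, hV, mul_apply] at this

theorem SpecialLinearGroup.center_eq_bot_of_charP_two [NoZeroDivisors R] [CharP R 2] :
    Subgroup.center SL(2, R) = ⊥ := by
  refine (Subgroup.eq_bot_iff_forall _).mpr fun g hg => ?_
  obtain ⟨r, hr, hrg⟩ := SpecialLinearGroup.mem_center_iff.mp hg
  obtain rfl : r = 1 := by simpa [CharTwo.neg_eq] using hr
  exact Subtype.ext (by simp [← hrg])

noncomputable def ProjectiveSpecialLinearGroup.mulEquivOfCharPTwo [NoZeroDivisors R] [CharP R 2] :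
    PSL(2, R) ≃* SL(2, R) :=
  (QuotientGroup.quotientMulEquivOfEq SpecialLinearGroup.center_eq_bot_of_charP_two).trans
    QuotientGroup.quotientBot

end CommRing

variable {F : Type*} [Field F]

theorem commute_of_commute_of_ne_scalar {A B C : Matrix (Fin 2) (Fin 2) F}
    (hA : ∀ r, A ≠ scalar (Fin 2) r) (hB : Commute A B) (hC : Commute A C) : Commute B C := by
  rw [commute_iff_cross_nonscalarPart_eq_zero] at hB hC ⊢
  exact cross_eq_zero_of_cross_eq_zero (fun h => hA _ (eq_scalar_of_nonscalarPart_eq_zero h)) hB hC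

theorem SpecialLinearGroup.commute_of_commute_of_notMem_center {g x y : SL(2, F)}
    (hg : g ∉ Subgroup.center SL(2, F)) (hx : Commute g x) (hy : Commute g y) : Commute x y := by
  have not_scalar (r : F) : (g : Matrix (Fin 2) (Fin 2) F) ≠ scalar (Fin 2) r := by
    intro hr
    refine hg (SpecialLinearGroup.mem_center_iff.mpr ⟨r, ?_, hr.symm⟩)
    simpa [hr] using g.property
  rw [← commute_map_iff SpecialLinearGroup.coeMonoidHom_injective] at hx hy ⊢
  exact commute_of_commute_of_ne_scalar not_scalar hx hy

theorem ProjectiveSpecialLinearGroup.nacent_eq_singleton_top_of_charP_two [CharP F 2] :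
    nacent PSL(2, F) = {⊤} := by
  let e := mulEquivOfCharPTwo (R := F)
  apply nacent_eq_singleton_top
  · obtain ⟨x, y, hxy⟩ := SpecialLinearGroup.exists_not_commute (R := F)
    exact ⟨e.symm x, e.symm y, (commute_map_iff e.symm.injective).not.mpr hxy⟩
  · intro g x y hg hx hy
    rw [← commute_map_iff e.injective] at hx hy ⊢
    exact SpecialLinearGroup.commute_of_commute_of_notMem_center
      (mt (MulEquivClass.apply_mem_center_iff e).mp hg) hx hy

end Matrix

theorem nacent_psl_two_q_of_mod_four_eq_zero_general (p k : ℕ) [Fact p.Prime]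
    (hmod : p ^ k % 4 = 0) :
    (nacent (Matrix.ProjectiveSpecialLinearGroup (Fin 2) (GaloisField p k))).ncard = 1 := by
  obtain rfl : p = 2 := by
    have two_dvd : 2 ∣ p ^ k := (by norm_num : 2 ∣ 4).trans (Nat.dvd_of_mod_eq_zero hmod)
    exact ((Nat.prime_dvd_prime_iff_eq Nat.prime_two Fact.out).mp
      (Nat.prime_two.dvd_of_dvd_pow two_dvd)).symm
  rw [ProjectiveSpecialLinearGroup.nacent_eq_singleton_top_of_charP_two, Set.ncard_singleton]

theorem nacent_psl_two_q_of_mod_four_eq_zero (p k : ℕ) [Fact p.Prime] (hk : k ≠ 0)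
    (hq : 5 < p ^ k) (hmod : p ^ k % 4 = 0) :
    (nacent (Matrix.ProjectiveSpecialLinearGroup (Fin 2) (GaloisField p k))).ncard = 1 :=
  nacent_psl_two_q_of_mod_four_eq_zero_general p k hmod
end

section
/- The dihedral group D₄₀ of order 80 (with 40 rotations) has exactly 22 distinct element centralizers: |cent(DihedralGroup 40)| = 22. -/
/-!
In `D_n` with `n > 2`, the rotation `r i` commutes with every rotation, and with the
reflections exactly when `2 i = 0`; so its centralizer is either the whole group or the
rotation subgroup. The reflection `sr i` commutes with `r j` iff `2 j = 0` and with `sr j` iff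
`2 i = 2 j`, so its centralizer is determined by `2 i`, and distinct values of `2 i` give
distinct centralizers. Hence `|cent(D_n)| = 2 + |2 • ZMod n| = 2 + n / gcd(n, 2)`, which is
`22` for `n = 40`.
-/

theorem ZMod.one_add_one_ne_zero_of_two_lt {n : ℕ} (hn : 2 < n) : (1 + 1 : ZMod n) ≠ 0 := by
  rw [one_add_one_eq_two, ← Nat.cast_two, ne_eq, ZMod.natCast_eq_zero_iff]
  exact fun h => (Nat.le_of_dvd two_pos h).not_gt hn

namespace DihedralGroup

open Subgroup

variable {n : ℕ}

@[simp]
theorem r_mem_centralizer_r (i j : ZMod n) : r j ∈ centralizer {r i} := by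
  simp [mem_centralizer_singleton_iff, add_comm]

@[simp]
theorem sr_mem_centralizer_r {i j : ZMod n} : sr j ∈ centralizer {r i} ↔ i + i = 0 := by
  simp only [mem_centralizer_singleton_iff, sr_mul_r, r_mul_sr, sr.injEq]
  constructor <;> intro h <;> linear_combination h

@[simp]
theorem r_mem_centralizer_sr {i j : ZMod n} : r j ∈ centralizer {sr i} ↔ j + j = 0 := by
  simp only [mem_centralizer_singleton_iff, sr_mul_r, r_mul_sr, sr.injEq]
  constructor <;> intro h <;> linear_combination -h

@[simp]
theorem sr_mem_centralizer_sr {i j : ZMod n} : sr j ∈ centralizer {sr i} ↔ i + i = j + j := by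
  simp only [mem_centralizer_singleton_iff, sr_mul_sr, r.injEq]
  constructor <;> intro h <;> linear_combination h

theorem centralizer_r_of_add_self_eq_zero {i : ZMod n} (hi : i + i = 0) :
    centralizer {r i} = ⊤ :=
  eq_top_iff.2 fun x _ => by cases x <;> simp [hi]

theorem centralizer_r_eq_centralizer_r {i j : ZMod n} (hi : i + i ≠ 0) (hj : j + j ≠ 0) :
    centralizer {r i} = centralizer {r j} := by
  ext (k | k) <;> simp [hi, hj]

theorem centralizer_sr_eq_centralizer_sr_iff {i j : ZMod n} :
    centralizer {sr i} = centralizer {sr j} ↔ i + i = j + j := by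
  refine ⟨fun h => ?_, fun h => ?_⟩
  · exact sr_mem_centralizer_sr.1 (h ▸ sr_mem_centralizer_sr.2 rfl)
  · ext (k | k) <;> simp [h]

theorem centralizer_r_one_ne_top (hn : 2 < n) : centralizer {r (1 : ZMod n)} ≠ ⊤ := fun h =>
  ZMod.one_add_one_ne_zero_of_two_lt hn (sr_mem_centralizer_r.1 (h ▸ mem_top (sr 0)))

theorem centralizer_sr_ne_top (hn : 2 < n) (i : ZMod n) : centralizer {sr i} ≠ ⊤ := fun h =>
  ZMod.one_add_one_ne_zero_of_two_lt hn (r_mem_centralizer_sr.1 (h ▸ mem_top (r 1)))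

theorem centralizer_sr_ne_centralizer_r_one (hn : 2 < n) (i : ZMod n) :
    centralizer {sr i} ≠ centralizer {r 1} := fun h =>
  ZMod.one_add_one_ne_zero_of_two_lt hn (sr_mem_centralizer_r.1 (h ▸ sr_mem_centralizer_sr.2 rfl))

theorem cent_eq (hn : 2 < n) :
    cent (DihedralGroup n) =
      {⊤, centralizer {r 1}} ∪ Set.range fun i => centralizer {sr i} := by
  ext C
  constructor
  · rintro ⟨i | i, rfl⟩
    · by_cases hi : i + i = 0
      · exact .inl (.inl (centralizer_r_of_add_self_eq_zero hi))
      · exact .inl (.inr (centralizer_r_eq_centralizer_r hi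
          (ZMod.one_add_one_ne_zero_of_two_lt hn)))
    · exact .inr ⟨i, rfl⟩
  · rintro ((rfl | rfl) | ⟨i, rfl⟩)
    · exact ⟨r 0, centralizer_r_of_add_self_eq_zero (add_zero 0)⟩
    · exact ⟨r 1, rfl⟩
    · exact ⟨sr i, rfl⟩

theorem ncard_range_centralizer_sr [NeZero n] :
    (Set.range fun i : ZMod n => centralizer {sr i}).ncard = n / n.gcd 2 := by
  -- `i ↦ centralizer {sr i}` and `i ↦ 2 • i` have the same fibres, hence equinumerous ranges.
  have hker : Setoid.ker (fun i : ZMod n => centralizer {sr i}) =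
      Setoid.ker (nsmulAddMonoidHom 2 : ZMod n →+ ZMod n) := by
    ext i j
    simp only [Setoid.ker_def, centralizer_sr_eq_centralizer_sr_iff, nsmulAddMonoidHom_apply,
      two_nsmul]
  rw [← Nat.card_coe_set_eq, ← Nat.card_congr (Setoid.quotientKerEquivRange _), hker,
    Nat.card_congr (Setoid.quotientKerEquivRange _), ← AddMonoidHom.coe_range,
    SetLike.coe_sort_coe, IsAddCyclic.card_nsmulAddMonoidHom_range, Nat.card_zmod]

theorem ncard_cent (hn : 2 < n) : (cent (DihedralGroup n)).ncard = n / n.gcd 2 + 2 := by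
  have : NeZero n := ⟨by omega⟩
  have hdisj :
      Disjoint {⊤, centralizer {r 1}} (Set.range fun i : ZMod n => centralizer {sr i}) := by
    rw [Set.disjoint_right]
    rintro _ ⟨i, rfl⟩ (h | h)
    exacts [centralizer_sr_ne_top hn i h, centralizer_sr_ne_centralizer_r_one hn i h]
  rw [cent_eq hn, Set.ncard_union_eq hdisj, Set.ncard_pair (centralizer_r_one_ne_top hn).symm,
    ncard_range_centralizer_sr, add_comm]

end DihedralGroup

theorem cent_dihedralGroup_forty :
    (cent (DihedralGroup 40)).ncard = 22 :=
  DihedralGroup.ncard_cent (by norm_num)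
end

section
/- Let G be a group such that |cent(H)| = |cent(G)| for every subgroup H of G. Then G is abelian. -/
section

variable {G : Type*} [Group G]

theorem cent_ncard_eq_one_of_subsingleton [Subsingleton G] : (cent G).ncard = 1 := by
  refine Set.ncard_eq_one.2 ⟨⊤, ?_⟩
  ext C
  simp [cent, Subsingleton.elim _ (⊤ : Subgroup G)]

theorem commute_of_cent_ncard_eq_one (h : (cent G).ncard = 1) (a b : G) : Commute a b := by
  obtain ⟨C, hC⟩ := Set.ncard_eq_one.1 h
  have centralizer_eq (g : G) : Subgroup.centralizer {g} = C :=
    Set.mem_singleton_iff.1 (hC ▸ Set.mem_range_self g)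
  have ha : a ∈ Subgroup.centralizer {b} := by
    -- all centralizers coincide with that of `1`, which is the whole group
    rw [centralizer_eq b, ← centralizer_eq 1]
    simp [Subgroup.mem_centralizer_singleton_iff]
  exact Subgroup.mem_centralizer_singleton_iff.1 ha

end

theorem abelian_of_all_subgroups_same_cent_card (G : Type*) [Group G]
    (h : ∀ H : Subgroup G, (cent H).ncard = (cent G).ncard) :
    ∀ a b : G, a * b = b * a :=
  commute_of_cent_ncard_eq_one ((h ⊥).symm.trans cent_ncard_eq_one_of_subsingleton)
end

section
/- Let G be a group with cent(G) finite, and suppose that |cent(H)| = |cent(G)| for every non-abelian subgroup H of G. Then G is an AC-group, i.e. the centralizer C_G(x) is abelian for every non-central element x of G. -/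
section

variable {G : Type*} [Group G]

theorem Subgroup.centralizer_subgroupOf (H : Subgroup G) (h : H) :
    (centralizer {(h : G)}).subgroupOf H = centralizer {h} := by
  ext y
  simp [mem_subgroupOf, mem_centralizer_singleton_iff, Subtype.ext_iff]

theorem cent_subgroup_eq_image (H : Subgroup G) :
    cent H = (·.subgroupOf H) '' Set.range fun h : H => Subgroup.centralizer {(h : G)} := by
  rw [← Set.range_comp]
  simp only [cent, Function.comp_def, Subgroup.centralizer_subgroupOf]

theorem injOn_subgroupOf_of_ncard_cent_eq (hfin : (cent G).Finite) {H : Subgroup G}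
    (hH : (cent H).ncard = (cent G).ncard) :
    Set.InjOn (·.subgroupOf H) (Set.range fun h : H => Subgroup.centralizer {(h : G)}) := by
  have hsub : (Set.range fun h : H => Subgroup.centralizer {(h : G)}) ⊆ cent G := by
    rintro _ ⟨h, rfl⟩
    exact ⟨h, rfl⟩
  refine Set.injOn_of_ncard_image_eq (le_antisymm (Set.ncard_image_le (hfin.subset hsub)) ?_)
    (hfin.subset hsub)
  rw [← cent_subgroup_eq_image, hH]
  exact Set.ncard_le_ncard hsub hfin

theorem mem_center_of_ncard_cent_centralizer_eq (hfin : (cent G).Finite) {x : G}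
    (hx : (cent (Subgroup.centralizer {x})).ncard = (cent G).ncard) :
    x ∈ Subgroup.center G := by
  have hx_mem : x ∈ Subgroup.centralizer {x} := Subgroup.mem_centralizer_singleton_iff.mpr rfl
  have htop : Subgroup.centralizer {x} = ⊤ :=
    injOn_subgroupOf_of_ncard_cent_eq hfin hx ⟨⟨x, hx_mem⟩, rfl⟩
      ⟨1, Subgroup.centralizer_eq_top_iff_subset.mpr (by simp)⟩
      (by simp only [Subgroup.subgroupOf_self, Subgroup.top_subgroupOf])
  exact Subgroup.centralizer_eq_top_iff_subset.mp htop rfl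

end

theorem ac_group_of_nonabelian_subgroups_same_cent_card (G : Type*) [Group G]
    (hfin : (cent G).Finite)
    (h : ∀ H : Subgroup G, ¬ IsMulCommutative H → (cent H).ncard = (cent G).ncard) :
    ∀ x : G, x ∉ Subgroup.center G → IsMulCommutative (Subgroup.centralizer {x}) := by
  intro x hx
  by_contra hC
  exact hx (mem_center_of_ncard_cent_centralizer_eq hfin (h _ hC))
end

section
/- Let G be a group whose set of centralizers cent(G) is finite, and let H be any subgroup of G. Then cent(H) is finite and |cent(H)| ≤ |cent(G)|. -/
/-! Restricting to `H` the centralizer in `G` of an element `h ∈ H` gives the centralizer of `h`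
in `H`, so `C ↦ C ⊓ H` maps `cent G` onto a set containing `cent H`. -/

theorem Subgroup.centralizer_singleton_eq_comap {H G : Type*} [Group H] [Group G] {f : H →* G}
    (hf : Function.Injective f) (h : H) :
    Subgroup.centralizer {h} = (Subgroup.centralizer {f h}).comap f := by
  ext x
  simp only [Subgroup.mem_comap, Subgroup.mem_centralizer_singleton_iff, ← map_mul, hf.eq_iff]

theorem cent_subset_image_comap {H G : Type*} [Group H] [Group G] {f : H →* G}
    (hf : Function.Injective f) : cent H ⊆ Subgroup.comap f '' cent G := by
  rintro _ ⟨h, rfl⟩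
  exact ⟨_, ⟨f h, rfl⟩, (Subgroup.centralizer_singleton_eq_comap hf h).symm⟩

theorem cent_subgroup_finite_and_card_le (G : Type*) [Group G]
    (hfin : (cent G).Finite) (H : Subgroup G) :
    (cent H).Finite ∧ (cent H).ncard ≤ (cent G).ncard := by
  have hsub := cent_subset_image_comap H.subtype_injective
  have himg := hfin.image (Subgroup.comap H.subtype)
  exact ⟨himg.subset hsub, (Set.ncard_le_ncard hsub himg).trans (Set.ncard_image_le hfin)⟩
end

section
/- Let G be a group with cent(G) finite and let H be a subgroup of G with |cent(H)| = |cent(G)|. Then H ∩ Z(G) = Z(H); that is, the intersection of H with the center of G equals the center of the group H (as subsets of G). -/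
/-!
Restricting to `H` the centralizers `C_G(k)`, `k ∈ H`, yields every element of `cent(H)`, so
`|cent(H)| ≤ |{C_G(k) : k ∈ H}| ≤ |cent(G)|`. Equality of the two ends forces every centralizer
`C_G(g)` to be some `C_G(k)` with `k ∈ H`; an element of `Z(H)` commutes with `k`, hence lies in
`C_G(k) = C_G(g)`, i.e. commutes with `g`.
-/

section

open Subgroup

variable {G : Type*} [Group G] (H : Subgroup G)

theorem Subgroup.comap_subtype_centralizer_singleton (k : H) :
    (centralizer {(k : G)}).comap H.subtype = centralizer {k} := by
  ext x
  simp only [mem_comap, mem_centralizer_singleton_iff, coe_subtype, Subtype.ext_iff, coe_mul]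

theorem Subgroup.inf_center_le_map_center : H ⊓ center G ≤ (center H).map H.subtype := by
  rintro x ⟨hxH, hxZ⟩
  exact ⟨⟨x, hxH⟩, mem_center_iff.mpr fun g => Subtype.ext (mem_center_iff.mp hxZ g), rfl⟩

theorem Subgroup.map_center_le_center_of_cent_subset
    (hH : cent G ⊆ Set.range fun k : H => centralizer {(k : G)}) :
    (center H).map H.subtype ≤ center G := by
  rintro _ ⟨z, hz, rfl⟩
  refine mem_center_iff.mpr fun g => ?_
  obtain ⟨k, hk : centralizer {(k : G)} = centralizer {g}⟩ := hH ⟨g, rfl⟩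
  have hzk : (z : G) ∈ centralizer {(k : G)} :=
    mem_centralizer_singleton_iff.mpr (congrArg Subtype.val (mem_center_iff.mp hz k)).symm
  rw [hk] at hzk
  exact (mem_centralizer_singleton_iff.mp hzk).symm

theorem cent_subgroup_eq_image_comap :
    cent H = (fun C : Subgroup G => C.comap H.subtype) ''
      Set.range fun k : H => centralizer {(k : G)} := by
  simp only [cent, ← Set.range_comp, Function.comp_def, comap_subtype_centralizer_singleton]

theorem range_centralizer_coe_eq_cent_of_ncard_le (hfin : (cent G).Finite)
    (h : (cent G).ncard ≤ (cent H).ncard) :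
    (Set.range fun k : H => centralizer {(k : G)}) = cent G := by
  have hsub : (Set.range fun k : H => centralizer {(k : G)}) ⊆ cent G :=
    Set.range_subset_iff.mpr fun k => ⟨k, rfl⟩
  refine Set.eq_of_subset_of_ncard_le hsub ?_ hfin
  calc (cent G).ncard ≤ (cent H).ncard := h
    _ ≤ _ := by
      rw [cent_subgroup_eq_image_comap]
      exact Set.ncard_image_le (hfin.subset hsub)

end

theorem inf_center_eq_center_of_same_cent_card (G : Type*) [Group G]
    (hfin : (cent G).Finite) (H : Subgroup G)
    (h : (cent H).ncard = (cent G).ncard) :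
    H ⊓ Subgroup.center G = (Subgroup.center H).map H.subtype :=
  le_antisymm H.inf_center_le_map_center <| le_inf (Subgroup.map_subtype_le _) <|
    H.map_center_le_center_of_cent_subset (range_centralizer_coe_eq_cent_of_ncard_le H hfin h.ge).ge
end

section
/- Let G be a group with cent(G) finite and let H be a subgroup of G with |cent(H)| = |cent(G)|. Then the quotient H/Z(H) is isomorphic to HZ(G)/Z(G), and the derived subgroup of HZ(G) equals the derived subgroup of H. -/
/-!
Equality of the finite numbers of centralizers forces every centralizer of `G` to be the
centralizer of an element of `H`, since `C ↦ C ∩ H` maps these onto `cent H`. An element of `H`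
central in `H` therefore commutes with all of `G`, so `Z(H) = Z(G) ∩ H` and `H/Z(H)` is the image
of `H` in `G/Z(G)`, which is also the image of `HZ(G)`. Commutators ignore central factors, so
`HZ(G)` and `H` have the same derived subgroup.
-/

open Subgroup

section Centralizers

variable {G : Type*} [Group G]

lemma centralizer_singleton_subgroupOf (H : Subgroup G) (x : H) :
    (centralizer {(x : G)}).subgroupOf H = centralizer {x} := by
  ext y
  simp [mem_centralizer_singleton_iff, mem_subgroupOf, ← Subtype.coe_inj]

lemma cent_eq_image_subgroupOf (H : Subgroup G) :
    cent H = (·.subgroupOf H) '' Set.range fun x : H => centralizer {(x : G)} := by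
  rw [← Set.range_comp]
  exact congrArg Set.range <| funext fun x => (centralizer_singleton_subgroupOf H x).symm

lemma exists_centralizer_eq_of_ncard_cent_eq (hfin : (cent G).Finite) (H : Subgroup G)
    (h : (cent H).ncard = (cent G).ncard) (g : G) :
    ∃ x : H, centralizer {(x : G)} = centralizer {g} := by
  set S := Set.range fun x : H => centralizer {(x : G)}
  have hS : S ⊆ cent G := Set.range_subset_iff.mpr fun x => ⟨x, rfl⟩
  have hcard : (cent G).ncard ≤ S.ncard :=
    calc (cent G).ncard = (cent H).ncard := h.symm
      _ ≤ S.ncard := cent_eq_image_subgroupOf H ▸ Set.ncard_image_le (hfin.subset hS)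
  have hg : centralizer {g} ∈ S := Set.eq_of_subset_of_ncard_le hS hcard hfin ▸ ⟨g, rfl⟩
  exact hg

lemma center_subgroupOf_eq_of_forall_exists_centralizer_eq (H : Subgroup G)
    (hH : ∀ g : G, ∃ x : H, centralizer {(x : G)} = centralizer {g}) :
    (center G).subgroupOf H = center H := by
  ext z
  simp only [mem_subgroupOf, mem_center_iff]
  refine ⟨fun hz y => Subtype.ext (hz y), fun hz g => ?_⟩
  obtain ⟨x, hx⟩ := hH g
  have hzx : (z : G) ∈ centralizer {(x : G)} :=
    mem_centralizer_singleton_iff.mpr (congrArg Subtype.val (hz x).symm)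
  exact (mem_centralizer_singleton_iff.mp (hx ▸ hzx)).symm

end Centralizers

namespace QuotientGroup

variable {G : Type*} [Group G]

noncomputable def quotientSubgroupOfEquivMap (H N : Subgroup G) [N.Normal] :
    H ⧸ N.subgroupOf H ≃* H.map (mk' N) :=
  have hker : ((mk' N).comp H.subtype).ker = N.subgroupOf H := by
    rw [← MonoidHom.comap_ker, ker_mk']
    rfl
  (quotientMulEquivOfEq hker.symm).trans <| (quotientKerEquivRange _).trans <|
    MulEquiv.subgroupCongr (by rw [MonoidHom.range_comp, range_subtype])

lemma map_mk'_sup_self (H N : Subgroup G) [N.Normal] :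
    (H ⊔ N).map (mk' N) = H.map (mk' N) := by
  rw [Subgroup.map_sup, map_mk'_self, sup_bot_eq]

end QuotientGroup

section Commutators

open scoped commutatorElement

variable {G : Type*} [Group G]

lemma commutatorElement_mul_mem_center {z₁ z₂ : G} (hz₁ : z₁ ∈ center G) (hz₂ : z₂ ∈ center G)
    (a b : G) : ⁅a * z₁, b * z₂⁆ = ⁅a, b⁆ := by
  have c₁ := mem_center_iff.mp hz₁
  have c₂ := mem_center_iff.mp hz₂
  calc ⁅a * z₁, b * z₂⁆ = a * (b * z₂ * z₁) * z₁⁻¹ * a⁻¹ * z₂⁻¹ * b⁻¹ := by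
        rw [c₁ (b * z₂)]; group
    _ = a * b * (a⁻¹ * z₂) * z₂⁻¹ * b⁻¹ := by rw [c₂ a⁻¹]; group
    _ = ⁅a, b⁆ := by group

lemma commutator_sup_center (H : Subgroup G) :
    ⁅H ⊔ center G, H ⊔ center G⁆ = ⁅H, H⁆ := by
  refine le_antisymm ?_ (commutator_mono le_sup_left le_sup_left)
  rw [commutator_le]
  intro a ha b hb
  obtain ⟨h₁, hh₁, z₁, hz₁, rfl⟩ := mem_sup_of_normal_right.mp ha
  obtain ⟨h₂, hh₂, z₂, hz₂, rfl⟩ := mem_sup_of_normal_right.mp hb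
  rw [commutatorElement_mul_mem_center hz₁ hz₂]
  exact commutator_mem_commutator hh₁ hh₂

end Commutators

theorem isoclinic_join_center_of_same_cent_card (G : Type*) [Group G]
    (hfin : (cent G).Finite) (H : Subgroup G)
    (h : (cent H).ncard = (cent G).ncard) :
    Nonempty ((H ⧸ Subgroup.center H) ≃*
        Subgroup.map (QuotientGroup.mk' (Subgroup.center G)) (H ⊔ Subgroup.center G)) ∧
      ⁅H ⊔ Subgroup.center G, H ⊔ Subgroup.center G⁆ = ⁅H, H⁆ := by
  have hcenter : (center G).subgroupOf H = center H :=
    center_subgroupOf_eq_of_forall_exists_centralizer_eq H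
      (exists_centralizer_eq_of_ncard_cent_eq hfin H h)
  refine ⟨⟨?_⟩, commutator_sup_center H⟩
  exact (QuotientGroup.quotientMulEquivOfEq hcenter.symm).trans <|
    (QuotientGroup.quotientSubgroupOfEquivMap H (center G)).trans <|
      MulEquiv.subgroupCongr (QuotientGroup.map_mk'_sup_self H (center G)).symm
end

section
/- Let G be a finite group such that G/Z(G) is a simple group. Then the derived subgroup G' of G is perfect (G'' = G'), the center of G' equals Z(G) ∩ G', and G/Z(G) is isomorphic to G'/Z(G'); in particular G and G' are isoclinic. -/
/-!
A subgroup `H` with `H ⊔ Z(G) = G` is isoclinic to `G`: writing every element as `h * z` with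
`z` central, commutators of `G` are commutators of `H`, an element of `H` centralizes `H` iff it
centralizes `G`, and `H → G/Z(G)` is onto with kernel `Z(H)`. When `G/Z(G)` is simple it is not
abelian (a group with cyclic central quotient is abelian), so its derived subgroup is everything,
i.e. `G' ⊔ Z(G) = G`; taking `H = G'` gives all three claims.
-/

open scoped commutatorElement

namespace Subgroup

variable {G : Type*} [Group G]

lemma commutatorElement_mul_mem_center_left {z : G} (hz : z ∈ center G) (a b : G) :
    ⁅a * z, b⁆ = ⁅a, b⁆ := by
  rw [commutatorElement_def, commutatorElement_def, mul_assoc a z b, ← mem_center_iff.mp hz b]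
  group

lemma commutatorElement_mul_mem_center_right {z : G} (hz : z ∈ center G) (a b : G) :
    ⁅a, b * z⁆ = ⁅a, b⁆ := by
  rw [← commutatorElement_inv, commutatorElement_mul_mem_center_left hz, commutatorElement_inv]

variable {H : Subgroup G}

lemma exists_mul_eq_of_sup_center_eq_top (hH : H ⊔ center G = ⊤) (g : G) :
    ∃ h ∈ H, ∃ z ∈ center G, h * z = g :=
  mem_sup_of_normal_right.mp (hH ▸ mem_top g)

lemma commutator_eq_commutator_of_sup_center_eq_top (hH : H ⊔ center G = ⊤) :
    ⁅H, H⁆ = _root_.commutator G := by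
  refine le_antisymm (commutator_mono le_top le_top) ?_
  rw [_root_.commutator_def, commutator_le]
  rintro g₁ - g₂ -
  obtain ⟨h₁, hh₁, z₁, hz₁, rfl⟩ := exists_mul_eq_of_sup_center_eq_top hH g₁
  obtain ⟨h₂, hh₂, z₂, hz₂, rfl⟩ := exists_mul_eq_of_sup_center_eq_top hH g₂
  rw [commutatorElement_mul_mem_center_left hz₁, commutatorElement_mul_mem_center_right hz₂]
  exact commutator_mem_commutator hh₁ hh₂

lemma center_eq_subgroupOf_of_sup_center_eq_top (hH : H ⊔ center G = ⊤) :
    center H = (center G).subgroupOf H := by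
  ext x
  rw [mem_subgroupOf, mem_center_iff, mem_center_iff]
  refine ⟨fun hx g => ?_, fun hx y => Subtype.ext (hx y)⟩
  obtain ⟨h, hh, z, hz, rfl⟩ := exists_mul_eq_of_sup_center_eq_top hH g
  have hxh : h * x = x * h := congrArg Subtype.val (hx ⟨h, hh⟩)
  rw [mul_assoc, ← mem_center_iff.mp hz, ← mul_assoc, hxh, mul_assoc]

lemma surjective_mk'_comp_subtype_of_sup_center_eq_top (hH : H ⊔ center G = ⊤) :
    Function.Surjective ((QuotientGroup.mk' (center G)).comp H.subtype) := by
  rintro ⟨g⟩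
  obtain ⟨h, hh, z, hz, rfl⟩ := exists_mul_eq_of_sup_center_eq_top hH g
  exact ⟨⟨h, hh⟩, (QuotientGroup.mk_mul_of_mem h hz).symm⟩

noncomputable def quotientCenterMulEquivOfSupCenterEqTop (hH : H ⊔ center G = ⊤) :
    H ⧸ center H ≃* G ⧸ center G :=
  (QuotientGroup.quotientMulEquivOfEq (by
      rw [center_eq_subgroupOf_of_sup_center_eq_top hH]; ext; simp [mem_subgroupOf])).trans
    (QuotientGroup.quotientKerEquivOfSurjective _
      (surjective_mk'_comp_subtype_of_sup_center_eq_top hH))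

lemma commutator_quotient_center_eq_top_of_isSimpleGroup (hG : IsSimpleGroup (G ⧸ center G)) :
    _root_.commutator (G ⧸ center G) = ⊤ := by
  refine (commutator_normal ⊤ ⊤).eq_bot_or_eq_top.resolve_left fun hbot => ?_
  let : CommGroup (G ⧸ center G) :=
    { mul_comm := ((_root_.commutator_eq_bot_iff _).mp hbot).is_comm.comm }
  -- `IsSimpleGroup.isCyclic` makes the abelian simple quotient cyclic
  have : IsMulCommutative G := isMulCommutative_of_isCyclic_quotient_center_self G
  have := hG.toNontrivial
  obtain ⟨q, hq⟩ := exists_ne (1 : G ⧸ center G)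
  obtain ⟨g, rfl⟩ := QuotientGroup.mk'_surjective _ q
  exact hq ((QuotientGroup.eq_one_iff g).mpr (center_eq_top (G := G) ▸ mem_top g))

lemma commutator_sup_center_eq_top_of_isSimpleGroup (hG : IsSimpleGroup (G ⧸ center G)) :
    _root_.commutator G ⊔ center G = ⊤ := by
  rw [← QuotientGroup.ker_mk' (center G), ← comap_map_eq, map_commutator_eq,
    QuotientGroup.range_mk', ← _root_.commutator_def,
    commutator_quotient_center_eq_top_of_isSimpleGroup hG, comap_top]

end Subgroup

theorem isoclinic_commutator_of_central_quotient_simple_general (G : Type*) [Group G]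
    (hsimple : IsSimpleGroup (G ⧸ Subgroup.center G)) :
    ⁅commutator G, commutator G⁆ = commutator G ∧
      (Subgroup.center (commutator G)).map (commutator G).subtype =
        Subgroup.center G ⊓ commutator G ∧
      Nonempty ((G ⧸ Subgroup.center G) ≃*
        (commutator G ⧸ Subgroup.center (commutator G))) := by
  have hG' := Subgroup.commutator_sup_center_eq_top_of_isSimpleGroup hsimple
  refine ⟨Subgroup.commutator_eq_commutator_of_sup_center_eq_top hG', ?_,
    ⟨(Subgroup.quotientCenterMulEquivOfSupCenterEqTop hG').symm⟩⟩
  rw [Subgroup.center_eq_subgroupOf_of_sup_center_eq_top hG', Subgroup.subgroupOf_map_subtype]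

theorem isoclinic_commutator_of_central_quotient_simple (G : Type*) [Group G] [Finite G]
    (hsimple : IsSimpleGroup (G ⧸ Subgroup.center G)) :
    ⁅commutator G, commutator G⁆ = commutator G ∧
      (Subgroup.center (commutator G)).map (commutator G).subtype =
        Subgroup.center G ⊓ commutator G ∧
      Nonempty ((G ⧸ Subgroup.center G) ≃*
        (commutator G ⧸ Subgroup.center (commutator G))) :=
  isoclinic_commutator_of_central_quotient_simple_general G hsimple
end

section
/- Let p be a prime and let G be a finite non-abelian p-group with |cent(G)| = n. Then the derived length of G is at most ⌊log_p(n−1)⌋ + 2; equivalently, the (⌊log_p(n−1)⌋ + 2)-th term of the derived series of G is trivial. -/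
/-!
Every `g` lies in `C_G(C_G(g))`, which is abelian and depends only on `C_G(g)`. So `G` is covered
by `n = |cent G|` abelian subgroups, and the largest of them, `A`, has index at most `n`. In a
`p`-group this index is `p ^ s`, so `s ≤ ⌊log_p (n - 1)⌋ + 1`. Finally an abelian subgroup of
index `p ^ s` bounds the derived length by `s + 1`: it lies in a subgroup `M` of index `p`, which
is normal with abelian quotient, so `G' ≤ M` and induction applies to `M`.
-/

open Finset Subgroup

namespace Subgroup

variable {G : Type*} [Group G]

theorem isMulCommutative_centralizer_centralizer_singleton (g : G) :
    IsMulCommutative (centralizer (centralizer {g} : Set G)) :=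
  ⟨⟨fun x y => Subtype.ext <|
    Set.centralizer_centralizer_comm_of_comm (by simp) x.1 x.2 y.1 y.2⟩⟩

theorem commutator_le_of_index_eq_minFac_card {H : Subgroup G}
    (hH : H.index = (Nat.card G).minFac) : _root_.commutator G ≤ H := by
  obtain hG | hG := eq_or_ne (Nat.card G) 1
  · rw [hG, Nat.minFac_one, index_eq_one] at hH
    exact hH ▸ le_top
  have := normal_of_index_eq_minFac_card hH
  have hprime : (Nat.card (G ⧸ H)).Prime := by
    rw [← index_eq_card, hH]
    exact Nat.minFac_prime hG
  have := Fact.mk hprime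
  have : IsCyclic (G ⧸ H) := isCyclic_of_prime_card rfl
  let := IsCyclic.commGroup (α := G ⧸ H)
  exact Normal.quotient_commutative_iff_commutator_le.mp inferInstance

theorem derivedSeries_succ_le_map_of_commutator_le {M : Subgroup G}
    (hM : _root_.commutator G ≤ M) (k : ℕ) :
    derivedSeries G (k + 1) ≤ (derivedSeries M k).map M.subtype := by
  induction k with
  | zero => simpa [← MonoidHom.range_eq_map] using hM
  | succ k ih =>
    rw [derivedSeries_succ, derivedSeries_succ M, map_commutator]
    exact commutator_mono ih ih

end Subgroup

theorem exists_isMulCommutative_index_le_ncard_cent {G : Type*} [Group G] [Finite G] :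
    ∃ A : Subgroup G, IsMulCommutative A ∧ A.index ≤ (cent G).ncard := by
  classical
  have := Fintype.ofFinite G
  let C : G → Subgroup G := fun g => centralizer {g}
  obtain ⟨g₀, hg₀⟩ := Finite.exists_max fun g => Nat.card (centralizer (C g : Set G))
  set A := centralizer (C g₀ : Set G)
  have hfiber : ∀ E ∈ univ.image C, #{g ∈ univ | C g = E} ≤ Nat.card A := by
    intro E hE
    obtain ⟨g, -, rfl⟩ := mem_image.mp hE
    calc #{g' ∈ univ | C g' = C g} ≤ #(centralizer (C g : Set G) : Set G).toFinset := by
          refine card_le_card fun g' hg' => ?_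
          rw [Set.mem_toFinset, ← (mem_filter.mp hg').2]
          exact Set.subset_centralizer_centralizer rfl
      _ ≤ Nat.card A := by rw [← Nat.card_eq_card_toFinset]; exact hg₀ g
  have hcover : Nat.card A * A.index ≤ Nat.card A * (cent G).ncard := by
    rw [card_mul_index, Nat.card_eq_fintype_card, ← card_univ, cent, Set.ncard_eq_toFinset_card',
      Set.toFinset_range]
    exact card_le_mul_card_image univ _ hfiber
  exact ⟨A, isMulCommutative_centralizer_centralizer_singleton g₀,
    Nat.le_of_mul_le_mul_left hcover Nat.card_pos⟩

namespace IsPGroup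

variable {p : ℕ} {G : Type*} [Group G] [Finite G]

theorem exists_le_index_eq_of_ne_top (hp : p.Prime) (hpG : IsPGroup p G) {A : Subgroup G}
    (hA : A ≠ ⊤) : ∃ M : Subgroup G, A ≤ M ∧ M.index = p := by
  have := Fact.mk hp
  obtain ⟨e, he⟩ := hpG.exists_card_eq
  obtain ⟨a, ha⟩ := (hpG.to_subgroup A).exists_card_eq
  have hlt : Nat.card A < Nat.card G := by
    rw [← A.card_mul_index]
    exact lt_mul_of_one_lt_right Nat.card_pos (one_lt_index_of_ne_top hA)
  rw [ha, he, Nat.pow_lt_pow_iff_right hp.one_lt] at hlt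
  obtain ⟨M, hM, hAM⟩ := Sylow.exists_subgroup_card_pow_prime_le p (m := e - 1)
    (he ▸ pow_dvd_pow p (e.sub_le 1)) A ha (by omega)
  refine ⟨M, hAM, Nat.eq_of_mul_eq_mul_right (pow_pos hp.pos (e - 1)) ?_⟩
  rw [← hM, index_mul_card, hM, he, ← pow_succ', Nat.sub_add_cancel (by omega)]

theorem commutator_le_of_index_eq (hp : p.Prime) (hpG : IsPGroup p G) {M : Subgroup G}
    (hM : M.index = p) : _root_.commutator G ≤ M := by
  have := Fact.mk hp
  obtain ⟨e, he⟩ := hpG.exists_card_eq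
  have he0 : e ≠ 0 := by
    rintro rfl
    rw [pow_zero, ← M.index_mul_card, hM] at he
    exact hp.ne_one (Nat.eq_one_of_mul_eq_one_right he)
  refine commutator_le_of_index_eq_minFac_card (hM.trans ?_)
  rw [he, Nat.pow_minFac he0, hp.minFac_eq]

theorem derivedSeries_eq_bot_of_index_eq_pow (hp : p.Prime) (hpG : IsPGroup p G)
    {A : Subgroup G} [IsMulCommutative A] {s : ℕ} (hA : A.index = p ^ s) :
    derivedSeries G (s + 1) = ⊥ := by
  induction s generalizing G with
  | zero =>
    rw [pow_zero, index_eq_one] at hA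
    subst hA
    rw [derivedSeries_one, commutator_def, commutator_eq_bot_iff_le_centralizer,
      le_centralizer_iff_isMulCommutative]
    assumption
  | succ s ih =>
    have hA_ne_top : A ≠ ⊤ := by
      rintro rfl
      rw [index_top] at hA
      exact (Nat.one_lt_pow s.succ_ne_zero hp.one_lt).ne hA
    obtain ⟨M, hAM, hM⟩ := hpG.exists_le_index_eq_of_ne_top hp hA_ne_top
    have hAM_index : (A.subgroupOf M).index = p ^ s := by
      have := relIndex_mul_index hAM
      rw [hM, hA, pow_succ] at this
      exact Nat.eq_of_mul_eq_mul_right hp.pos this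
    have hM_bot := ih (hpG.to_subgroup M) hAM_index
    have hG_le := derivedSeries_succ_le_map_of_commutator_le
      (hpG.commutator_le_of_index_eq hp hM) (s + 1)
    rwa [hM_bot, Subgroup.map_bot, le_bot_iff] at hG_le

end IsPGroup

theorem Nat.le_log_sub_one_add_one_of_pow_le {b x y : ℕ} (hb : 1 < b) (h : b ^ x ≤ y) :
    x ≤ Nat.log b (y - 1) + 1 := by
  cases x with
  | zero => omega
  | succ x =>
    have : b ^ x < b ^ (x + 1) := Nat.pow_lt_pow_right hb x.lt_succ_self
    have := Nat.le_log_of_pow_le hb (show b ^ x ≤ y - 1 by omega)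
    omega

theorem derivedLength_le_of_pGroup_general (p : ℕ) (hp : p.Prime) (G : Type*) [Group G] [Finite G]
    (hpG : IsPGroup p G) (n : ℕ)
    (hn : (cent G).ncard = n) :
    derivedSeries G (Nat.log p (n - 1) + 2) = ⊥ := by
  obtain ⟨A, hA, hA_index⟩ := exists_isMulCommutative_index_le_ncard_cent (G := G)
  have := Fact.mk hp
  obtain ⟨s, hs⟩ := hpG.index A
  have hs_le : s ≤ Nat.log p (n - 1) + 1 :=
    Nat.le_log_sub_one_add_one_of_pow_le hp.one_lt (hs ▸ hn ▸ hA_index)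
  exact le_bot_iff.mp <| (derivedSeries_antitone G (by omega : s + 1 ≤ _)).trans
    (hpG.derivedSeries_eq_bot_of_index_eq_pow hp hs).le

theorem derivedLength_le_of_pGroup (p : ℕ) (hp : p.Prime) (G : Type*) [Group G] [Finite G]
    (hpG : IsPGroup p G) (hG : ¬ ∀ a b : G, a * b = b * a) (n : ℕ)
    (hn : (cent G).ncard = n) :
    derivedSeries G (Nat.log p (n - 1) + 2) = ⊥ :=
  derivedLength_le_of_pGroup_general p hp G hpG n hn
end

section
/- Let G be a finite non-abelian nilpotent group with |cent(G)| = n. Let S = {p₁, …, p_m} be the set of primes q such that the Sylow q-subgroup of G is non-abelian, and let p = min S. Then the derived length of G is at most 2 + ⌊log_p n⌋ − Σ_{q ∈ S, q ≠ p} ⌊log_p(q+1)⌋; equivalently, the term of the derived series of G at index 2 + ⌊log_p n⌋ − Σ_{q ∈ S, q ≠ p} ⌊log_p(q+1)⌋ is trivial. -/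
open Subgroup

section Cent

variable {G H : Type*} [Group G] [Group H]

theorem top_mem_cent : (⊤ : Subgroup G) ∈ cent G :=
  ⟨1, by ext; simp [mem_centralizer_singleton_iff]⟩

theorem one_le_ncard_cent [Finite G] : 1 ≤ (cent G).ncard :=
  (Set.ncard_pos (Set.finite_range _)).2 ⟨⊤, top_mem_cent⟩

theorem Subgroup.isMulCommutative_centralizer_centralizer_singleton_s17 (x : G) :
    IsMulCommutative (centralizer (centralizer {x} : Set G)) :=
  .of_setLike_mul_comm fun _ ha _ hb =>
    Set.centralizer_centralizer_comm_of_comm (by simp) _ ha _ hb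

theorem exists_isMulCommutative_index_lt_ncard_cent [Finite G] (hG : ¬ IsMulCommutative G) :
    ∃ B : Subgroup G, IsMulCommutative B ∧ B ≠ ⊤ ∧ B.index < (cent G).ncard := by
  classical
  set s := (Set.toFinite (cent G \ {⊤})).toFinset
  have hs (x : G) (hx : x ∉ center G) : centralizer {x} ∈ s := by
    simp [s, hx, cent]
  have hcover : ∀ g : G, ∃ C ∈ s, g ∈ centralizer (C : Set G) := by
    intro g
    by_cases hg : g ∈ center G
    · obtain ⟨a, b, hab⟩ : ∃ a b : G, a * b ≠ b * a := by
        simpa [isMulCommutative_iff] using hG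
      exact ⟨_, hs a fun ha => hab (mem_center_iff.mp ha b).symm, center_le_centralizer _ hg⟩
    · exact ⟨_, hs g hg, mem_centralizer_iff.mpr fun _ => mem_centralizer_singleton_iff.mp⟩
  obtain ⟨C, hC, -, hCs⟩ := exists_index_le_card_of_leftCoset_cover (s := s) (g := 1)
    (H := fun C : Subgroup G => centralizer (C : Set G)) <| Set.eq_univ_of_forall fun g => by
      obtain ⟨C, hC, hg⟩ := hcover g
      exact Set.mem_iUnion₂.mpr ⟨C, hC, by simpa using hg⟩
  obtain ⟨⟨x, rfl⟩, hx⟩ : C ∈ cent G ∧ C ≠ ⊤ := by simpa [s] using hC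
  refine ⟨_, isMulCommutative_centralizer_centralizer_singleton_s17 x, fun htop => hx ?_, ?_⟩
  · refine top_le_iff.mp (htop ▸ centralizer_le ?_)
    simp [mem_centralizer_singleton_iff]
  · calc _ ≤ s.card := hCs
      _ = (cent G).ncard - 1 := by
        rw [← Set.ncard_eq_toFinset_card, Set.ncard_sdiff_singleton_of_mem top_mem_cent]
      _ < (cent G).ncard := Nat.sub_lt one_le_ncard_cent one_pos

theorem Subgroup.map_centralizer_singleton (e : G ≃* H) (g : G) :
    (centralizer {g}).map e.toMonoidHom = centralizer {e g} := by
  ext y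
  rw [mem_map_equiv, mem_centralizer_singleton_iff, mem_centralizer_singleton_iff,
    ← e.symm.injective.eq_iff]
  simp

theorem ncard_cent_congr (e : G ≃* H) : (cent G).ncard = (cent H).ncard := by
  have : cent H = Subgroup.map e.toMonoidHom '' cent G := by
    ext C
    simp only [cent, Set.mem_range, Set.mem_image, exists_exists_eq_and,
      map_centralizer_singleton]
    exact e.surjective.exists
  rw [this, Set.ncard_image_of_injective _ (map_injective e.injective)]

end Cent

section Pi

variable {η : Type*} {f : η → Type*} [∀ i, Group (f i)]

theorem Subgroup.centralizer_singleton_pi (x : ∀ i, f i) :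
    centralizer {x} = Subgroup.pi Set.univ fun i => centralizer {x i} := by
  ext y
  simp [mem_centralizer_singleton_iff, funext_iff, mem_pi]

theorem Subgroup.pi_univ_injective :
    Function.Injective
      (Subgroup.pi Set.univ : (∀ i, Subgroup (f i)) → Subgroup (∀ i, f i)) := by
  classical
  intro H K h
  ext i g
  simpa using congrArg (Pi.mulSingle i g ∈ ·) (congrArg SetLike.coe h)

theorem cent_pi :
    cent (∀ i, f i) = Subgroup.pi Set.univ '' Set.univ.pi fun i => cent (f i) := by
  ext C
  constructor
  · rintro ⟨x, rfl⟩
    exact ⟨fun i => centralizer {x i}, fun i _ => ⟨x i, rfl⟩,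
      (centralizer_singleton_pi x).symm⟩
  · rintro ⟨H, hH, rfl⟩
    choose x hx using fun i => hH i trivial
    exact ⟨x, (centralizer_singleton_pi x).trans (by simp_rw [hx])⟩

theorem ncard_cent_pi [Fintype η] : (cent (∀ i, f i)).ncard = ∏ i, (cent (f i)).ncard := by
  rw [cent_pi, Set.ncard_image_of_injective _ pi_univ_injective, ← Nat.card_coe_set_eq,
    Nat.card_congr (Equiv.Set.univPi _), Nat.card_pi]
  simp only [Nat.card_coe_set_eq]

theorem derivedSeries_pi_le (k : ℕ) :
    derivedSeries (∀ i, f i) k ≤ Subgroup.pi Set.univ fun i => derivedSeries (f i) k := by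
  induction k with
  | zero => simp [pi_top]
  | succ k ih =>
    simp_rw [derivedSeries_succ]
    exact (commutator_mono ih ih).trans (commutator_pi_pi_le _ _)

end Pi

section Derived

variable {G : Type*} [Group G]

theorem Subgroup.exists_lt_commutator_le_of_lt_normalizer {B : Subgroup G}
    (hB : B < normalizer (B : Set G)) : ∃ K : Subgroup G, B < K ∧ ⁅K, K⁆ ≤ B := by
  obtain ⟨y, hyN, hyB⟩ := SetLike.exists_of_lt hB
  set N := normalizer (B : Set G)
  let φ := QuotientGroup.mk' (B.subgroupOf N)
  have hBN : (B.subgroupOf N).map N.subtype = B := map_subgroupOf_eq_of_le hB.le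
  -- `K / B` is the cyclic subgroup of `N / B` generated by the image of `y`
  refine ⟨((zpowers (φ ⟨y, hyN⟩)).comap φ).map N.subtype, lt_of_le_of_ne ?_ ?_, ?_⟩
  · exact hBN.ge.trans (map_mono ((QuotientGroup.ker_mk' _).ge.trans (φ.ker_le_comap _)))
  · exact fun h => hyB (h.ge ⟨⟨y, hyN⟩, mem_zpowers _, rfl⟩)
  · rw [← map_commutator]
    refine le_of_le_of_eq (map_mono ?_) hBN
    refine ((Subgroup.map_eq_bot_iff _).mp (le_bot_iff.mp ?_)).trans
      (QuotientGroup.ker_mk' _).le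
    rw [map_commutator]
    refine (commutator_mono (map_comap_le _ _) (map_comap_le _ _)).trans ?_
    exact (commutator_self_eq_bot_iff.mpr inferInstance).le

theorem derivedSeries_le_of_index_dvd_prime_pow [Group.IsNilpotent G] {p : ℕ} (hp : p.Prime) :
    ∀ {k : ℕ} {B : Subgroup G}, B.index ∣ p ^ k → derivedSeries G k ≤ B
  | 0, B, hB => by simp [index_eq_one.mp (Nat.dvd_one.mp (by simpa using hB))]
  | k + 1, B, hB => by
    rcases eq_or_ne B ⊤ with rfl | hB_top
    · exact le_top
    obtain ⟨K, hBK, hKB⟩ := exists_lt_commutator_le_of_lt_normalizer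
      (Group.normalizerCondition_of_isNilpotent B hB_top.lt_top)
    have hK : K.index ∣ p ^ k := by
      have hmul := relIndex_mul_index hBK.le
      obtain ⟨j, -, hj⟩ := (Nat.dvd_prime_pow hp).mp ((Dvd.intro _ hmul).trans hB)
      have hj0 : j ≠ 0 := by
        rintro rfl
        exact hBK.not_ge (relIndex_eq_one.mp hj)
      refine Nat.dvd_of_mul_dvd_mul_left hp.pos ?_
      rw [← pow_succ']
      exact (mul_dvd_mul_right (hj ▸ dvd_pow_self p hj0) _).trans (hmul ▸ hB)
    have ih := derivedSeries_le_of_index_dvd_prime_pow hp hK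
    rw [derivedSeries_succ]
    exact (commutator_mono ih ih).trans hKB

theorem IsPGroup.exists_pow_lt_ncard_cent_derivedSeries_succ_eq_bot [Finite G] {p : ℕ}
    (hp : p.Prime) (hG : IsPGroup p G) (hnc : ¬ IsMulCommutative G) :
    ∃ k, 0 < k ∧ p ^ k < (cent G).ncard ∧ derivedSeries G (k + 1) = ⊥ := by
  have := Fact.mk hp
  have := hG.isNilpotent
  obtain ⟨B, hBc, hB_top, hBn⟩ := exists_isMulCommutative_index_lt_ncard_cent hnc
  obtain ⟨k, hk⟩ := hG.index B
  refine ⟨k, Nat.pos_of_ne_zero ?_, hk ▸ hBn, ?_⟩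
  · rintro rfl
    exact hB_top (index_eq_one.mp hk)
  · have hle := derivedSeries_le_of_index_dvd_prime_pow hp (hk ▸ dvd_rfl : B.index ∣ p ^ k)
    rw [derivedSeries_succ, ← le_bot_iff, ← (commutator_self_eq_bot_iff (H := B)).mpr hBc]
    exact commutator_mono hle hle

theorem Sylow.mem_primeFactors_card_of_not_isMulCommutative [Finite G] {p : ℕ}
    (hp : p.Prime) (P : Sylow p G) (hP : ¬ IsMulCommutative (P : Subgroup G)) :
    p ∈ (Nat.card G).primeFactors := by
  have := Fact.mk hp
  have : Nontrivial (P : Subgroup G) := by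
    by_contra h
    rw [not_nontrivial_iff_subsingleton] at h
    exact hP (.of_comm fun _ _ => Subsingleton.elim _ _)
  obtain ⟨n, hn, hcard⟩ := P.isPGroup'.nontrivial_iff_card.mp this
  refine Nat.mem_primeFactors.mpr ⟨hp, ?_, Nat.card_pos.ne'⟩
  exact (dvd_pow_self p hn.ne').trans (hcard ▸ card_subgroup_dvd_card (P : Subgroup G))

end Derived

namespace Nat

theorem log_add_log_le_log_mul (b : ℕ) {m n : ℕ} (hm : m ≠ 0) (hn : n ≠ 0) :
    log b m + log b n ≤ log b (m * n) := by
  rcases le_or_gt b 1 with hb | hb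
  · simp [log_of_left_le_one hb]
  refine (le_log_iff_pow_le hb (mul_ne_zero hm hn)).mpr ?_
  rw [pow_add]
  exact Nat.mul_le_mul (pow_log_le_self b hm) (pow_log_le_self b hn)

theorem sum_log_le_log_prod {ι : Type*} (b : ℕ) (s : Finset ι) {f : ι → ℕ}
    (hf : ∀ i ∈ s, f i ≠ 0) : ∑ i ∈ s, log b (f i) ≤ log b (∏ i ∈ s, f i) := by
  induction s using Finset.cons_induction with
  | empty => simp
  | cons a s _ ih =>
    rw [Finset.sum_cons, Finset.prod_cons]
    have hs : ∀ i ∈ s, f i ≠ 0 := fun i hi => hf i (Finset.mem_cons_of_mem hi)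
    calc log b (f a) + ∑ i ∈ s, log b (f i) ≤ log b (f a) + log b (∏ i ∈ s, f i) :=
          Nat.add_le_add_left (ih hs) _
      _ ≤ log b (f a * ∏ i ∈ s, f i) :=
          log_add_log_le_log_mul b (hf a (Finset.mem_cons_self a s))
            (Finset.prod_ne_zero_iff.mpr hs)

theorem log_self_add_one {b : ℕ} (hb : 1 < b) : log b (b + 1) = 1 :=
  log_eq_one_iff'.mpr ⟨le_succ b, by nlinarith⟩

theorem add_log_add_one_le {b r k c : ℕ} (hb : 1 < b) (hbr : b ≤ r) (hk : 0 < k)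
    (hc : r ^ k ≤ c) : k + log b (r + 1) ≤ 2 + log b c := by
  set t := log b r
  have hr : r ≠ 0 := by omega
  have ht : 1 ≤ t := (le_log_iff_pow_le hb hr).mpr (by simpa using hbr)
  have hr_succ : log b (r + 1) ≤ t + 1 := by
    rw [← log_mul_base hb hr]
    exact log_mono_right (by nlinarith)
  have hkt : k * t ≤ log b c := by
    refine (le_log_iff_pow_le hb ((pow_pos (by omega) k).trans_le hc).ne').mpr ?_
    calc b ^ (k * t) = (b ^ t) ^ k := by rw [← pow_mul, mul_comm]
      _ ≤ r ^ k := Nat.pow_le_pow_left (pow_log_le_self b hr) k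
      _ ≤ c := hc
  -- `(k - 1) * (t - 1) ≥ 0`
  nlinarith

end Nat

section Nilpotent

variable {G : Type*} [Group G] [Finite G] [Group.IsNilpotent G]

theorem derivedSeries_eq_bot_of_forall_sylow {k : ℕ}
    (h : ∀ p, p.Prime → ∀ P : Sylow p G, derivedSeries (P : Subgroup G) k = ⊥) :
    derivedSeries G k = ⊥ := by
  obtain ⟨e⟩ := (Group.isNilpotent_of_finite_tfae (G := G)).out 0 4 |>.mp ‹_›
  have hpi : derivedSeries
      (∀ p : (Nat.card G).primeFactors, ∀ P : Sylow p G, (P : Subgroup G)) k = ⊥ := by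
    refine le_bot_iff.mp ((derivedSeries_pi_le k).trans ((pi_eq_bot_iff _).mpr fun p => ?_).le)
    refine le_bot_iff.mp ((derivedSeries_pi_le k).trans ((pi_eq_bot_iff _).mpr fun P => ?_).le)
    exact h p (Nat.prime_of_mem_primeFactors p.2) P
  rw [← map_derivedSeries_eq (f := e.toMonoidHom) e.surjective, hpi, Subgroup.map_bot]

theorem prod_le_ncard_cent {s : Finset ℕ} (hs : s ⊆ (Nat.card G).primeFactors) (c : ℕ → ℕ)
    (hc : ∀ q ∈ s, ∃ P : Sylow q G, c q ≤ (cent (P : Subgroup G)).ncard) :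
    ∏ q ∈ s, c q ≤ (cent G).ncard := by
  let (q : ℕ) : Fintype (Sylow q G) := Fintype.ofFinite _
  obtain ⟨e⟩ := (Group.isNilpotent_of_finite_tfae (G := G)).out 0 4 |>.mp ‹_›
  calc ∏ q ∈ s, c q ≤ ∏ q ∈ s, ∏ P : Sylow q G, (cent (P : Subgroup G)).ncard :=
        Finset.prod_le_prod' fun q hq => by
          obtain ⟨P, hP⟩ := hc q hq
          exact hP.trans <| Finset.single_le_prod'
            (f := fun P : Sylow q G => (cent (P : Subgroup G)).ncard)
            (fun _ _ => one_le_ncard_cent) (Finset.mem_univ P)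
    _ ≤ ∏ q ∈ (Nat.card G).primeFactors, ∏ P : Sylow q G, (cent (P : Subgroup G)).ncard :=
        Finset.prod_le_prod_of_subset_of_one_le' hs fun q _ _ =>
          Finset.one_le_prod' fun _ _ => one_le_ncard_cent
    _ = (cent G).ncard := by
        rw [← ncard_cent_congr e, ncard_cent_pi, ← Finset.prod_coe_sort]
        simp_rw [ncard_cent_pi]

theorem ncard_cent_mul_prod_le {S : Finset ℕ}
    (hS : ∀ q ∈ S, q.Prime ∧ ∃ P : Sylow q G, ¬ IsMulCommutative (P : Subgroup G))
    {r : ℕ} (hr : r ∈ S) (P : Sylow r G) :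
    (cent (P : Subgroup G)).ncard * ∏ q ∈ S.erase r, (q + 1) ≤ (cent G).ncard := by
  classical
  set c := Function.update (· + 1) r (cent (P : Subgroup G)).ncard
  have hc (q : ℕ) (hq : q ∈ S.erase r) : c q = q + 1 :=
    Function.update_of_ne (Finset.ne_of_mem_erase hq) _ _
  rw [← Function.update_self r (cent (P : Subgroup G)).ncard (· + 1),
    ← Finset.prod_congr rfl hc, Finset.mul_prod_erase S c hr]
  refine prod_le_ncard_cent (fun q hq => ?_) c fun q hq => ?_
  · obtain ⟨hq, Q, hQ⟩ := hS q hq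
    exact Sylow.mem_primeFactors_card_of_not_isMulCommutative hq Q hQ
  · rcases eq_or_ne q r with rfl | hqr
    · exact ⟨P, (Function.update_self _ _ _).le⟩
    obtain ⟨hq_prime, Q, hQ⟩ := hS q hq
    obtain ⟨k, hk, hkc, -⟩ :=
      Q.isPGroup'.exists_pow_lt_ncard_cent_derivedSeries_succ_eq_bot hq_prime hQ
    have hqc : q + 1 ≤ (cent (Q : Subgroup G)).ncard := (Nat.le_self_pow hk.ne' q).trans_lt hkc
    exact ⟨Q, (hc q (Finset.mem_erase.mpr ⟨hqr, hq⟩)).trans_le hqc⟩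


theorem log_ncard_cent_add_sum_log_le {S : Finset ℕ}
    (hS : ∀ q ∈ S, q.Prime ∧ ∃ P : Sylow q G, ¬ IsMulCommutative (P : Subgroup G))
    {r : ℕ} (hr : r ∈ S) (P : Sylow r G) (b : ℕ) :
    Nat.log b (cent (P : Subgroup G)).ncard + ∑ q ∈ S.erase r, Nat.log b (q + 1) ≤
      Nat.log b (cent G).ncard :=
  calc _ ≤ Nat.log b (cent (P : Subgroup G)).ncard + Nat.log b (∏ q ∈ S.erase r, (q + 1)) :=
        Nat.add_le_add_left (Nat.sum_log_le_log_prod b _ fun q _ => q.succ_ne_zero) _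
    _ ≤ Nat.log b ((cent (P : Subgroup G)).ncard * ∏ q ∈ S.erase r, (q + 1)) :=
        Nat.log_add_log_le_log_mul b (Nat.one_le_iff_ne_zero.mp one_le_ncard_cent)
          (Finset.prod_ne_zero_iff.mpr fun q _ => q.succ_ne_zero)
    _ ≤ Nat.log b (cent G).ncard := Nat.log_mono_right (ncard_cent_mul_prod_le hS hr P)

end Nilpotent

theorem derivedLength_le_of_nilpotent_general (G : Type*) [Group G] [Finite G]
    [Group.IsNilpotent G] (n : ℕ)
    (hn : (cent G).ncard = n) (S : Finset ℕ)
    (hS : ∀ q : ℕ, q ∈ S ↔ q.Prime ∧ ∃ P : Sylow q G, ¬ IsMulCommutative (P : Subgroup G))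
    (hSne : S.Nonempty) (p : ℕ) (hp : p = S.min' hSne) :
    derivedSeries G (2 + Nat.log p n - ∑ q ∈ S.erase p, Nat.log p (q + 1)) = ⊥ := by
  have hpS : p ∈ S := hp ▸ S.min'_mem hSne
  have hS' (q : ℕ) (hq : q ∈ S) := (hS q).mp hq
  have hp_prime : p.Prime := (hS' p hpS).1
  have hshift (r : ℕ) (hr : r ∈ S) :
      ∑ q ∈ S.erase p, Nat.log p (q + 1) + 1 =
        ∑ q ∈ S.erase r, Nat.log p (q + 1) + Nat.log p (r + 1) := by
    calc _ = ∑ q ∈ S.erase p, Nat.log p (q + 1) + Nat.log p (p + 1) := by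
          rw [Nat.log_self_add_one hp_prime.one_lt]
      _ = _ := by rw [Finset.sum_erase_add _ _ hpS, Finset.sum_erase_add _ _ hr]
  refine derivedSeries_eq_bot_of_forall_sylow fun r hr P => ?_
  by_cases hP : IsMulCommutative (P : Subgroup G)
  · obtain ⟨Q, -⟩ := (hS' p hpS).2
    have hlog := hn ▸ log_ncard_cent_add_sum_log_le hS' hpS Q p
    refine le_bot_iff.mp ((derivedSeries_antitone _ (by omega : 1 ≤ _)).trans ?_)
    rw [derivedSeries_one, (commutator_eq_bot_iff _).mpr hP]
  · have hrS : r ∈ S := (hS r).mpr ⟨hr, P, hP⟩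
    obtain ⟨k, hk, hkc, hder⟩ :=
      P.isPGroup'.exists_pow_lt_ncard_cent_derivedSeries_succ_eq_bot hr hP
    have hk_le := Nat.add_log_add_one_le hp_prime.one_lt (hp ▸ S.min'_le r hrS) hk hkc.le
    have hlog := hn ▸ log_ncard_cent_add_sum_log_le hS' hrS P p
    have hshift_r := hshift r hrS
    exact le_bot_iff.mp ((derivedSeries_antitone _ (by omega)).trans hder.le)

theorem derivedLength_le_of_nilpotent (G : Type*) [Group G] [Finite G]
    [Group.IsNilpotent G] (hG : ¬ ∀ a b : G, a * b = b * a) (n : ℕ)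
    (hn : (cent G).ncard = n) (S : Finset ℕ)
    (hS : ∀ q : ℕ, q ∈ S ↔ q.Prime ∧ ∃ P : Sylow q G, ¬ IsMulCommutative (P : Subgroup G))
    (hSne : S.Nonempty) (p : ℕ) (hp : p = S.min' hSne) :
    derivedSeries G (2 + Nat.log p n - ∑ q ∈ S.erase p, Nat.log p (q + 1)) = ⊥ :=
  derivedLength_le_of_nilpotent_general G n hn S hS hSne p hp
end
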